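/- arXiv:2503.03438 — 3 statements merged into one kernel-verified Lean document; each statement's English description precedes it below -/
import Mathlib

section
/- Let E be a real inner product space, T a natural number, and g : Fin T → E a family of task gradients. For each index i, let g'_i be the orthogonal projection of g_i onto the orthogonal complement of the submodule spanned by {g j : j ≠ i}. Then for every family of nonnegative weights w : Fin T → ℝ (w_i ≥ 0 for all i) and every index j, ⟪∑_i w_i • g'_i, g j⟫ ≥ 0. In particular the GradOPS aggregated update direction G' = ∑_i g'_i satisfies ⟪G', g j⟫ ≥ 0 for every j, i.e. it does not conflict with any original task gradient. -/
open scoped RealInnerProductSpace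

/-- The GradOPS-modified gradient: the orthogonal projection of `g i` onto the orthogonal
complement of the submodule spanned by the other task gradients `{g j : j ≠ i}`. -/
noncomputable def gradOPSGrad {E : Type*} [NormedAddCommGroup E] [InnerProductSpace ℝ E]
    {T : ℕ} (g : Fin T → E) (i : Fin T) : E :=
  haveI : FiniteDimensional ℝ (Submodule.span ℝ (g '' {j | j ≠ i})) :=
    FiniteDimensional.span_of_finite ℝ (Set.toFinite _)
  g i - (Submodule.orthogonalProjection (Submodule.span ℝ (g '' {j | j ≠ i})) (g i) : E)

lemma gradOPSGrad_inner_nonneg {E : Type*} [NormedAddCommGroup E] [InnerProductSpace ℝ E]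
    {T : ℕ} (g : Fin T → E) (i j : Fin T) : 0 ≤ ⟪gradOPSGrad g i, g j⟫ := by
  haveI : FiniteDimensional ℝ (Submodule.span ℝ (g '' {j | j ≠ i})) :=
    FiniteDimensional.span_of_finite ℝ (Set.toFinite _)
  set S := Submodule.span ℝ (g '' {j | j ≠ i}) with hS
  have hmem : gradOPSGrad g i ∈ Sᗮ := by
    simpa [gradOPSGrad, hS] using Submodule.sub_starProjection_mem_orthogonal (K := S) (g i)
  by_cases hji : j = i
  · subst hji
    have h0 : ⟪gradOPSGrad g j, (Submodule.orthogonalProjection S (g j) : E)⟫ = 0 := by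
      rw [real_inner_comm]; exact hmem _ (Submodule.orthogonalProjection S (g j)).2
    have : ⟪gradOPSGrad g j, g j⟫
        = ⟪gradOPSGrad g j, gradOPSGrad g j⟫ := by
      have : (g j : E) = gradOPSGrad g j + (Submodule.orthogonalProjection S (g j) : E) := by
        simp [gradOPSGrad, hS]
      rw [this, inner_add_right, h0, add_zero]
    rw [this]
    exact real_inner_self_nonneg
  · have hgj : g j ∈ S := Submodule.subset_span ⟨j, hji, rfl⟩
    have := hmem (g j) hgj
    rw [real_inner_comm] at this
    simp [this]

theorem stmt3 {E : Type*} [NormedAddCommGroup E] [InnerProductSpace ℝ E]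
    {T : ℕ} (g : Fin T → E) :
    (∀ (w : Fin T → ℝ), (∀ i, 0 ≤ w i) → ∀ j : Fin T,
      0 ≤ ⟪∑ i, w i • gradOPSGrad g i, g j⟫) ∧
    ∀ j : Fin T, 0 ≤ ⟪∑ i, gradOPSGrad g i, g j⟫ := by
  have key : ∀ (w : Fin T → ℝ), (∀ i, 0 ≤ w i) → ∀ j : Fin T,
      0 ≤ ⟪∑ i, w i • gradOPSGrad g i, g j⟫ := by
    intro w hw j
    rw [sum_inner]
    refine Finset.sum_nonneg fun i _ => ?_
    rw [real_inner_smul_left]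
    exact mul_nonneg (hw i) (gradOPSGrad_inner_nonneg g i j)
  refine ⟨key, fun j => ?_⟩
    
  simpa using key (fun _ => 1) (fun _ => zero_le_one) j
end

section
/- Let E be a real Hilbert space, T ≥ 1 a natural number, L > 0, and f : E → ℝ a differentiable function whose gradient ∇f is L-Lipschitz. Let θ ∈ E, and let g, v : Fin T → E be families of vectors such that ∇f(θ) = ∑_i g_i, ⟪g_i, v_j⟫ ≥ 0 for all indices i ≠ j, and ⟪g_i, v_i⟫ = ‖v_i‖² for every i. If 0 < t < 2/(T·L) and v_i ≠ 0 for at least one index i, then f(θ - t • ∑_i v_i) < f(θ); that is, each GradOPS step with step size t < 2/(T·L) strictly decreases the total loss unless all modified gradients vanish. -/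
open scoped RealInnerProductSpace Gradient

lemma descent_aux {E : Type*} [NormedAddCommGroup E] [InnerProductSpace ℝ E] [CompleteSpace E]
    {L : ℝ} (hL : 0 ≤ L) (f : E → ℝ) (hf : Differentiable ℝ f)
    (hlip : LipschitzWith (Real.toNNReal L) (∇ f)) (x u : E) :
    f (x + u) ≤ f x + ⟪∇ f x, u⟫ + L / 2 * ‖u‖ ^ 2 := by
  set G : ℝ → ℝ := fun s => f (x + s • u) - s * ⟪∇ f x, u⟫ - L * s ^ 2 / 2 * ‖u‖ ^ 2 with hG
  have hderiv : ∀ s : ℝ, HasDerivAt G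
      (⟪∇ f (x + s • u), u⟫ - ⟪∇ f x, u⟫ - L * s * ‖u‖ ^ 2) s := by
    intro s
    have hc : HasDerivAt (fun s : ℝ => x + s • u) u s := by
      simpa using ((hasDerivAt_id s).smul_const u).const_add x
    have hfc : HasDerivAt (fun s : ℝ => f (x + s • u)) ⟪∇ f (x + s • u), u⟫ s := by
      have := ((hf (x + s • u)).hasGradientAt.hasFDerivAt).comp_hasDerivAt s hc
      simpa [InnerProductSpace.toDual_apply_apply, Function.comp_def] using this
    have h2 : HasDerivAt (fun s : ℝ => s * ⟪∇ f x, u⟫) ⟪∇ f x, u⟫ s := by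
      simpa using (hasDerivAt_id s).mul_const ⟪∇ f x, u⟫
    have h3 : HasDerivAt (fun s : ℝ => L * s ^ 2 / 2 * ‖u‖ ^ 2) (L * s * ‖u‖ ^ 2) s := by
      have : HasDerivAt (fun s : ℝ => s ^ 2) (2 * s) s := by
        simpa using hasDerivAt_pow 2 s
      have := ((this.const_mul L).div_const 2).mul_const (‖u‖ ^ 2)
      refine this.congr_deriv ?_
      ring
    exact (hfc.sub h2).sub h3
  have hanti : AntitoneOn G (Set.Icc (0:ℝ) 1) := by
    apply antitoneOn_of_deriv_nonpos (convex_Icc 0 1)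
    · exact Continuous.continuousOn (by
        have : Differentiable ℝ G := fun s => (hderiv s).differentiableAt
        exact this.continuous)
    · exact fun s _ => (hderiv s).differentiableAt.differentiableWithinAt
    · intro s hs
      rw [interior_Icc] at hs
      rw [(hderiv s).deriv]
      have hbound : ⟪∇ f (x + s • u) - ∇ f x, u⟫ ≤ L * s * ‖u‖ ^ 2 := by
        calc ⟪∇ f (x + s • u) - ∇ f x, u⟫ ≤ ‖∇ f (x + s • u) - ∇ f x‖ * ‖u‖ :=
              real_inner_le_norm _ _
          _ ≤ (L * (s * ‖u‖)) * ‖u‖ := by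
              apply mul_le_mul_of_nonneg_right _ (norm_nonneg u)
              have := hlip.dist_le_mul (x + s • u) x
              simp only [dist_eq_norm] at this
              calc ‖∇ f (x + s • u) - ∇ f x‖ ≤ Real.toNNReal L * ‖x + s • u - x‖ := this
                _ = L * (s * ‖u‖) := by
                    rw [Real.coe_toNNReal _ hL]
                    congr 1
                    simp [norm_smul, abs_of_pos hs.1]
          _ = L * s * ‖u‖ ^ 2 := by ring
      have : ⟪∇ f (x + s • u) - ∇ f x, u⟫ = ⟪∇ f (x + s • u), u⟫ - ⟪∇ f x, u⟫ :=
        inner_sub_left _ _ _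
      linarith [hbound, this]
  have := hanti (Set.left_mem_Icc.2 zero_le_one) (Set.right_mem_Icc.2 zero_le_one) zero_le_one
  simp only [hG] at this
  simp only [one_smul, zero_smul, add_zero, one_mul, zero_pow, mul_zero, zero_mul,
    sub_zero, zero_div, one_pow, mul_one] at this
  linarith

theorem stmt10 {E : Type*} [NormedAddCommGroup E] [InnerProductSpace ℝ E] [CompleteSpace E]
    {T : ℕ} (hT : 1 ≤ T) (L : ℝ) (hL : 0 < L)
    (f : E → ℝ) (hf : Differentiable ℝ f)
    (hlip : LipschitzWith (Real.toNNReal L) (∇ f))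
    (θ : E) (g v : Fin T → E)
    (hgrad : ∇ f θ = ∑ i, g i)
    (h1 : ∀ i j : Fin T, i ≠ j → 0 ≤ ⟪g i, v j⟫)
    (h2 : ∀ i : Fin T, ⟪g i, v i⟫ = ‖v i‖ ^ 2)
    (t : ℝ) (ht0 : 0 < t) (ht : t < 2 / (T * L))
    (hv : ∃ i, v i ≠ 0) :
    f (θ - t • ∑ i, v i) < f θ := by
  set u : E := ∑ i, v i with hu
  set S : ℝ := ∑ i, ‖v i‖ ^ 2 with hS
  have hSpos : 0 < S := by
    obtain ⟨i, hi⟩ := hv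
    have h0 : 0 < ‖v i‖ ^ 2 := pow_pos (norm_pos_iff.2 hi) 2
    exact lt_of_lt_of_le h0 (Finset.single_le_sum (f := fun j => ‖v j‖ ^ 2)
      (fun j _ => by positivity) (Finset.mem_univ i))
  have hinner : S ≤ ⟪∇ f θ, u⟫ := by
    rw [hgrad, hu, sum_inner]
    refine Finset.sum_le_sum fun i _ => ?_
    rw [inner_sum]
    have hnn : ∀ j ∈ Finset.univ, (0:ℝ) ≤ ⟪g i, v j⟫ := by
      intro j _
      rcases eq_or_ne i j with rfl | hij
      · rw [h2]; positivity
      · exact h1 i j hij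
    calc ‖v i‖ ^ 2 = ⟪g i, v i⟫ := (h2 i).symm
      _ ≤ ∑ j, ⟪g i, v j⟫ := Finset.single_le_sum hnn (Finset.mem_univ i)
  have hnorm : ‖u‖ ^ 2 ≤ T * S := by
    have h1' : ‖u‖ ≤ ∑ i, ‖v i‖ := norm_sum_le _ _
    have h2' : (∑ i, ‖v i‖) ^ 2 ≤ T * S := by
      have := sq_sum_le_card_mul_sum_sq (s := (Finset.univ : Finset (Fin T)))
        (f := fun i => ‖v i‖)
      simpa [hS] using this
    calc ‖u‖ ^ 2 ≤ (∑ i, ‖v i‖) ^ 2 := by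
          apply pow_le_pow_left₀ (norm_nonneg u) h1'
      _ ≤ T * S := h2'
  have key := descent_aux hL.le f hf hlip θ (-(t • u))
  have heq : θ + -(t • u) = θ - t • u := by abel
  rw [heq] at key
  have hin : ⟪∇ f θ, -(t • u)⟫ = -(t * ⟪∇ f θ, u⟫) := by
    rw [inner_neg_right, real_inner_smul_right]
  have hn : ‖-(t • u)‖ ^ 2 = t ^ 2 * ‖u‖ ^ 2 := by
    rw [norm_neg, norm_smul, mul_pow]
    simp [abs_of_pos ht0]
  rw [hin, hn] at key
  have hTL : 0 < (T : ℝ) * L := by positivity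
  have ht' : t * ((T : ℝ) * L) < 2 := (lt_div_iff₀ hTL).mp ht
  have h3 : L / 2 * (t ^ 2 * ‖u‖ ^ 2) ≤ L / 2 * t ^ 2 * (T * S) := by
    have := mul_le_mul_of_nonneg_left hnorm (by positivity : (0:ℝ) ≤ L / 2 * t ^ 2)
    linarith
  have h4 : f θ - t * S + L / 2 * t ^ 2 * (T * S) < f θ := by
    have hts : 0 < t * S := mul_pos ht0 hSpos
    have h6 : L / 2 * t * T < 1 := by nlinarith
    have e : L / 2 * t ^ 2 * (T * S) = (L / 2 * t * T) * (t * S) := by ring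
    have : L / 2 * t ^ 2 * (T * S) < t * S := by
      rw [e]
      calc (L / 2 * t * ↑T) * (t * S) < 1 * (t * S) :=
            mul_lt_mul_of_pos_right h6 hts
        _ = t * S := one_mul _
    linarith
  have h5 : t * ⟪∇ f θ, u⟫ ≥ t * S := mul_le_mul_of_nonneg_left hinner ht0.le
  linarith
end

section
/- Let E be a real Hilbert space, T ≥ 1 a natural number, L > 0, and f : E → ℝ a differentiable function whose gradient ∇f is L-Lipschitz. Let θ ∈ E, let g, v : Fin T → E be families of vectors such that ∇f(θ) = ∑_i g_i, ⟪g_i, v_j⟫ ≥ 0 for all indices i ≠ j, ⟪g_i, v_i⟫ = ‖v_i‖² and v_i ≠ 0 for every i, and let w : Fin T → ℝ be strictly positive weights (w_i > 0 for all i). If the step size t satisfies 0 < t and t < (2 · w_i · ‖v_i‖²) / (T · L · w_j² · ‖v_j‖²) for all index pairs i, j, then f(θ - t • ∑_i w_i • v_i) < f(θ). -/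
open scoped RealInnerProductSpace Gradient
open intervalIntegral in

lemma descent_lemma {E : Type*} [NormedAddCommGroup E] [InnerProductSpace ℝ E] [CompleteSpace E]
    {L : ℝ} (hL : 0 ≤ L) {f : E → ℝ} (hf : Differentiable ℝ f)
    (hlip : LipschitzWith (Real.toNNReal L) (∇ f)) (x d : E) :
    f (x + d) ≤ f x + ⟪∇ f x, d⟫ + L / 2 * ‖d‖ ^ 2 := by
  have key : ∀ s : ℝ, HasDerivAt (fun s : ℝ => f (x + s • d)) ⟪∇ f (x + s • d), d⟫ s := by
    intro s
    have h1 : HasDerivAt (fun s : ℝ => x + s • d) d s := by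
      simpa using ((hasDerivAt_id s).smul_const d).const_add x
    have h2 : HasFDerivAt f (InnerProductSpace.toDual ℝ E (∇ f (x + s • d))) (x + s • d) :=
      (hf (x + s • d)).hasGradientAt
    simpa [InnerProductSpace.toDual_apply_apply, Function.comp_def] using h2.comp_hasDerivAt s h1
  have hcont : Continuous fun s : ℝ => ⟪∇ f (x + s • d), d⟫ := by
    exact (hlip.continuous.comp (by continuity)).inner continuous_const
  have hFTC : f (x + d) - f x = ∫ s in (0:ℝ)..1, ⟪∇ f (x + s • d), d⟫ := by
    have := intervalIntegral.integral_eq_sub_of_hasDerivAt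
      (fun s _ => key s) (hcont.intervalIntegrable 0 1)
    simpa using this.symm
  have hbound : ∀ s ∈ Set.Icc (0:ℝ) 1,
      ⟪∇ f (x + s • d), d⟫ ≤ ⟪∇ f x, d⟫ + L * s * ‖d‖ ^ 2 := by
    intro s hs
    have h3 : ⟪∇ f (x + s • d) - ∇ f x, d⟫ ≤ L * s * ‖d‖ ^ 2 := by
      have h5 : ‖∇ f (x + s • d) - ∇ f x‖ ≤ L * (s * ‖d‖) := by
        have := hlip.dist_le_mul (x + s • d) x
        rw [dist_eq_norm, dist_eq_norm, add_sub_cancel_left, norm_smul,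
          Real.norm_of_nonneg hs.1, Real.coe_toNNReal _ hL] at this
        exact this
      calc ⟪∇ f (x + s • d) - ∇ f x, d⟫ ≤ ‖∇ f (x + s • d) - ∇ f x‖ * ‖d‖ :=
            real_inner_le_norm _ _
        _ ≤ (L * (s * ‖d‖)) * ‖d‖ :=
            mul_le_mul_of_nonneg_right h5 (norm_nonneg d)
        _ = L * s * ‖d‖ ^ 2 := by ring
    have := inner_sub_left (𝕜 := ℝ) (∇ f (x + s • d)) (∇ f x) d
    linarith [h3, this.symm.le, this.le]
  have hint : (∫ s in (0:ℝ)..1, ⟪∇ f (x + s • d), d⟫)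
      ≤ ∫ s in (0:ℝ)..1, (⟪∇ f x, d⟫ + L * s * ‖d‖ ^ 2) := by
    apply intervalIntegral.integral_mono_on (by norm_num)
      (hcont.intervalIntegrable 0 1)
      ((by continuity : Continuous fun s : ℝ => ⟪∇ f x, d⟫ + L * s * ‖d‖ ^ 2).intervalIntegrable 0 1)
    exact hbound
  have hval : (∫ s in (0:ℝ)..1, (⟪∇ f x, d⟫ + L * s * ‖d‖ ^ 2))
      = ⟪∇ f x, d⟫ + L / 2 * ‖d‖ ^ 2 := by
    rw [intervalIntegral.integral_add (intervalIntegrable_const)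
      (by apply Continuous.intervalIntegrable; continuity)]
    have h5 : (∫ s in (0:ℝ)..1, L * s * ‖d‖ ^ 2) = L / 2 * ‖d‖ ^ 2 := by
      rw [show (fun s : ℝ => L * s * ‖d‖ ^ 2) = fun s : ℝ => (L * ‖d‖ ^ 2) * s by ext s; ring]
      rw [intervalIntegral.integral_const_mul, integral_id]
      ring
    rw [h5, intervalIntegral.integral_const]
    norm_num
  linarith [hFTC, hint, hval.le, hval.ge]
theorem stmt12 {E : Type*} [NormedAddCommGroup E] [InnerProductSpace ℝ E] [CompleteSpace E]
    {T : ℕ} (hT : 1 ≤ T) (L : ℝ) (hL : 0 < L)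
    (f : E → ℝ) (hf : Differentiable ℝ f)
    (hlip : LipschitzWith (Real.toNNReal L) (∇ f))
    (θ : E) (g v : Fin T → E)
    (hgrad : ∇ f θ = ∑ i, g i)
    (h1 : ∀ i j : Fin T, i ≠ j → 0 ≤ ⟪g i, v j⟫)
    (h2 : ∀ i : Fin T, ⟪g i, v i⟫ = ‖v i‖ ^ 2)
    (hv : ∀ i, v i ≠ 0)
    (w : Fin T → ℝ) (hw : ∀ i, 0 < w i)
    (t : ℝ) (ht0 : 0 < t)
    (ht : ∀ i j : Fin T, t < (2 * w i * ‖v i‖ ^ 2) / (T * L * w j ^ 2 * ‖v j‖ ^ 2)) :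
    f (θ - t • ∑ i, w i • v i) < f θ := by
  have hTne : Nonempty (Fin T) := ⟨⟨0, by omega⟩⟩
  set G : E := ∑ i, w i • v i with hG
  set S : ℝ := ∑ i, w i * ‖v i‖ ^ 2 with hS
  set Q : ℝ := ∑ i, w i ^ 2 * ‖v i‖ ^ 2 with hQ
  -- step-size inequality summed over the diagonal
  have hSQ : t * ((T : ℝ) * L * Q) < 2 * S := by
    have key : ∀ j : Fin T, t * ((T : ℝ) * L * (w j ^ 2 * ‖v j‖ ^ 2)) < 2 * (w j * ‖v j‖ ^ 2) := by
      intro j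
      have hden : 0 < (T : ℝ) * L * w j ^ 2 * ‖v j‖ ^ 2 := by
        have : (0:ℝ) < (T:ℝ) := by exact_mod_cast Nat.lt_of_lt_of_le Nat.zero_lt_one hT
        have hvj : 0 < ‖v j‖ := norm_pos_iff.mpr (hv j)
        have hwj := hw j
        positivity
      have := (lt_div_iff₀ hden).mp (ht j j)
      nlinarith [this]
    calc t * ((T : ℝ) * L * Q) = ∑ j, t * ((T : ℝ) * L * (w j ^ 2 * ‖v j‖ ^ 2)) := by
          rw [hQ, Finset.mul_sum, Finset.mul_sum]
      _ < ∑ j, 2 * (w j * ‖v j‖ ^ 2) := Finset.sum_lt_sum_of_nonempty Finset.univ_nonempty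
          (fun j _ => key j)
      _ = 2 * S := by rw [hS, Finset.mul_sum]
  -- lower bound for the inner product
  have hinner : S ≤ ⟪∇ f θ, G⟫ := by
    rw [hgrad, hG, sum_inner]
    have hterm : ∀ i : Fin T, w i * ‖v i‖ ^ 2 ≤ ⟪g i, ∑ j, w j • v j⟫ := by
      intro i
      rw [inner_sum]
      have : ∀ j : Fin T, ⟪g i, w j • v j⟫ = w j * ⟪g i, v j⟫ := fun j =>
        real_inner_smul_right _ _ _
      calc w i * ‖v i‖ ^ 2 = w i * ⟪g i, v i⟫ := by rw [h2]
        _ = ⟪g i, w i • v i⟫ := (this i).symm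
        _ ≤ ∑ j, ⟪g i, w j • v j⟫ := by
            apply Finset.single_le_sum (f := fun j => ⟪g i, w j • v j⟫) _ (Finset.mem_univ i)
            intro j _
            rw [this j]
            rcases eq_or_ne i j with rfl | hij
            · rw [h2]; exact mul_nonneg (hw i).le (sq_nonneg _)
            · exact mul_nonneg (hw j).le (h1 i j hij)
    calc S = ∑ i, w i * ‖v i‖ ^ 2 := hS
      _ ≤ ∑ i, ⟪g i, ∑ j, w j • v j⟫ := Finset.sum_le_sum fun i _ => hterm i
  -- upper bound on ‖G‖²
  have hnorm : ‖G‖ ^ 2 ≤ (T : ℝ) * Q := by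
    have h5 : ‖G‖ ≤ ∑ i, w i * ‖v i‖ := by
      refine (norm_sum_le _ _).trans_eq (Finset.sum_congr rfl fun i _ => ?_)
      rw [norm_smul, Real.norm_of_nonneg (hw i).le]
    have h6 : (∑ i, w i * ‖v i‖) ^ 2 ≤ (T : ℝ) * Q := by
      have := sq_sum_le_card_mul_sum_sq (s := (Finset.univ : Finset (Fin T)))
        (f := fun i => w i * ‖v i‖)
      simpa [hQ, mul_pow] using this
    calc ‖G‖ ^ 2 ≤ (∑ i, w i * ‖v i‖) ^ 2 := by
          apply sq_le_sq' _ h5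
          have : (0:ℝ) ≤ ∑ i, w i * ‖v i‖ := Finset.sum_nonneg fun i _ => mul_nonneg (hw i).le (norm_nonneg _)
          linarith [norm_nonneg G]
      _ ≤ (T : ℝ) * Q := h6
  -- descent lemma
  have hdesc := descent_lemma hL.le hf hlip θ (-(t • G))
  rw [← sub_eq_add_neg] at hdesc
  have hiden : ⟪∇ f θ, -(t • G)⟫ = -(t * ⟪∇ f θ, G⟫) := by
    rw [inner_neg_right, real_inner_smul_right]
  have hnid : ‖-(t • G)‖ ^ 2 = t ^ 2 * ‖G‖ ^ 2 := by
    rw [norm_neg, norm_smul, Real.norm_of_nonneg ht0.le, mul_pow]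
  rw [hiden, hnid] at hdesc
  -- combine
  have hfin : L / 2 * (t ^ 2 * ‖G‖ ^ 2) < t * ⟪∇ f θ, G⟫ := by
    have hstep : L / 2 * (t ^ 2 * ‖G‖ ^ 2) ≤ t / 2 * (t * ((T : ℝ) * L * Q)) := by
      have hcoef : (0:ℝ) ≤ L / 2 * t ^ 2 := by positivity
      nlinarith [mul_le_mul_of_nonneg_left hnorm hcoef]
    have : t / 2 * (t * ((T : ℝ) * L * Q)) < t / 2 * (2 * S) :=
      mul_lt_mul_of_pos_left hSQ (by positivity)
    nlinarith [mul_le_mul_of_nonneg_left hinner ht0.le]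
  linarith [hdesc, hfin]
end
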